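/- arXiv:1509.06357 — 2 statements merged into one kernel-verified Lean document; each statement's English description precedes it below -/
import Mathlib

section
/- For every q ∈ ℕ and p = 4q+4, let G^I_p be the graph with vertex set {v_0, …, v_{p−1}} and edge set {v_0v_3} ∪ {v_i v_{i+1} : 0 ≤ i ≤ p−2} ∪ {v_i v_{i+2} : 0 ≤ i ≤ p−3}. Then the contracted solution graph C^c_4(G^I_p, {v_{p−2}, v_{p−1}}) has at least 4! = 24 connected components that each contain at least 2^q nodes. -/
open SimpleGraph

/-- A proper `k`-coloring of a graph. -/
def IsColoring {W : Type*} (G : SimpleGraph W) (k : ℕ) (α : W → Fin k) : Prop :=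
  ∀ u v : W, G.Adj u v → α u ≠ α v

/-- The `k`-color graph `C_k(G)`: nodes are proper `k`-colorings of `G`,
two colorings being adjacent iff they differ on exactly one vertex. -/
def colorGraph {W : Type*} (G : SimpleGraph W) (k : ℕ) :
    SimpleGraph {α : W → Fin k // IsColoring G k α} where
  Adj α β := ∃! w, α.1 w ≠ β.1 w
  symm := ⟨by
    rintro α β ⟨w, hw, hu⟩
    exact ⟨w, hw.symm, fun u hu' => hu u hu'.symm⟩⟩
  loopless := ⟨by
    rintro α ⟨w, hw, -⟩
    exact hw rfl⟩

/-- The subgraph of a labeled graph consisting of the edges between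
equally labeled nodes. -/
def sameLabelSub {N L : Type*} (H : SimpleGraph N) (f : N → L) : SimpleGraph N where
  Adj x y := H.Adj x y ∧ f x = f y
  symm := ⟨fun _ _ h => ⟨h.1.symm, h.2.symm⟩⟩
  loopless := ⟨fun x h => H.loopless.irrefl x h.1⟩

/-- The quotient graph obtained from a labeled graph by contracting every
(maximal) connected set of equally labeled nodes (i.e. every label component)
into a single node. -/
def quotGraph {N L : Type*} (H : SimpleGraph N) (f : N → L) :
    SimpleGraph (sameLabelSub H f).ConnectedComponent where
  Adj c d := c ≠ d ∧ ∃ a b, (sameLabelSub H f).connectedComponentMk a = c ∧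
      (sameLabelSub H f).connectedComponentMk b = d ∧ H.Adj a b
  symm := ⟨by
    rintro c d ⟨hne, a, b, ha, hb, hab⟩
    exact ⟨hne.symm, b, a, hb, ha, hab.symm⟩⟩
  loopless := ⟨fun c h => h.1 rfl⟩

/-- The common label of a label component. -/
def quotLabel {N L : Type*} (H : SimpleGraph N) (f : N → L) :
    (sameLabelSub H f).ConnectedComponent → L :=
  SimpleGraph.ConnectedComponent.lift f (by
    intro v w p hp
    clear hp
    induction p with
    | nil => rfl
    | cons h _ ih => exact (show _ ∧ _ from h).2.trans ih)

/-- The label of a coloring: its restriction to the terminal set `T`. -/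
def csgLabelFun {W : Type*} (G : SimpleGraph W) (k : ℕ) (T : Set W) :
    {α : W → Fin k // IsColoring G k α} → (T → Fin k) :=
  fun α t => α.1 t.1

/-- The node set of the contracted solution graph: the label components. -/
abbrev CSGNode {W : Type*} (G : SimpleGraph W) (k : ℕ) (T : Set W) :=
  (sameLabelSub (colorGraph G k) (csgLabelFun G k T)).ConnectedComponent

/-- The contracted solution graph `C^c_k(G,T)`. -/
def CSG {W : Type*} (G : SimpleGraph W) (k : ℕ) (T : Set W) : SimpleGraph (CSGNode G k T) :=
  quotGraph (colorGraph G k) (csgLabelFun G k T)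

/-- The `γ`-node of the contracted solution graph: the label component containing `γ`. -/
def csgNode {W : Type*} (G : SimpleGraph W) (k : ℕ) (T : Set W)
    (γ : {α : W → Fin k // IsColoring G k α}) : CSGNode G k T :=
  (sameLabelSub (colorGraph G k) (csgLabelFun G k T)).connectedComponentMk γ

/-- The label of a node of the contracted solution graph: the common restriction
to `T` of its colorings. -/
def csgLabel {W : Type*} (G : SimpleGraph W) (k : ℕ) (T : Set W) :
    CSGNode G k T → (T → Fin k) :=
  quotLabel (colorGraph G k) (csgLabelFun G k T)

/-- The restriction of a proper coloring to an induced subgraph. -/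
def restrictColoring {W : Type*} (G : SimpleGraph W) (k : ℕ) (S : Set W)
    (γ : {α : W → Fin k // IsColoring G k α}) :
    {α : S → Fin k // IsColoring (G.induce S) k α} :=
  ⟨fun u => γ.1 u.1, fun u w h => γ.2 u.1 w.1 h⟩

/-- A graph is chordal if it contains no induced cycle of length greater than 3. -/
def Chordal {W : Type*} (G : SimpleGraph W) : Prop :=
  ∀ n : ℕ, 4 ≤ n → IsEmpty (SimpleGraph.cycleGraph n ↪g G)

/-- `S` is a vertex cut: `G - S` is disconnected. -/
def IsVertexCut {W : Type*} (G : SimpleGraph W) (S : Set W) : Prop :=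
  ¬ (G.induce Sᶜ).Preconnected

/-- `G` is `l`-connected. -/
def LConnected {W : Type*} (G : SimpleGraph W) (l : ℕ) : Prop :=
  G.Connected ∧ l + 1 ≤ Nat.card W ∧ ∀ S : Set W, IsVertexCut G S → l ≤ S.ncard

/-- A labeled graph `(H,ℓ)`, whose labels are `k`-colorings of the complete graph
on a vertex (type) `S`, is an `(|S|,k)`-color-complete graph. -/
def IsColorComplete {N S : Type*} (k : ℕ) (H : SimpleGraph N) (ℓ : N → S → Fin k) : Prop :=
  (∀ x, Function.Injective (ℓ x)) ∧
  (∀ f : S → Fin k, Function.Injective f → ∃! x, ℓ x = f) ∧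
  (∀ x y, H.Adj x y ↔ ∃! s, ℓ x s ≠ ℓ y s)

/-- The injective neighborhood property. -/
def INP {N L : Type*} (H : SimpleGraph N) (ℓ : N → L) : Prop :=
  ∀ u v w : N, H.Adj u v → H.Adj u w → v ≠ w → ℓ v ≠ ℓ w

/-- The weight `w(P)` of a walk `P` in a labeled graph: the sum over the vertices `x`
of `P` of the number of colors used by labels of neighbors of `x` in `P` but not by
the label of `x`. -/
noncomputable def walkWeight {N S : Type*} {k : ℕ} {G : SimpleGraph N} (ℓ : N → S → Fin k)
    {a b : N} (P : G.Walk a b) : ℕ :=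
  letI := Classical.decEq N
  ∑ x ∈ P.support.toFinset,
    ((⋃ y ∈ P.toSubgraph.neighborSet x, Set.range (ℓ y)) \ Set.range (ℓ x)).ncard

/-- The unit interval graph `G^I_p`, with vertex set `{v_0, …, v_{p-1}}` and edge set
`{v_0v_3} ∪ {v_i v_{i+1} : 0 ≤ i ≤ p-2} ∪ {v_i v_{i+2} : 0 ≤ i ≤ p-3}`. -/
def GIp (p : ℕ) : SimpleGraph (Fin p) where
  Adj i j := ((i.1 = 0 ∧ j.1 = 3) ∨ j.1 = i.1 + 1 ∨ j.1 = i.1 + 2) ∨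
      ((j.1 = 0 ∧ i.1 = 3) ∨ i.1 = j.1 + 1 ∨ i.1 = j.1 + 2)
  symm := ⟨fun _ _ h => h.symm⟩
  loopless := ⟨by
    intro i h
    rcases h with (⟨h1, h2⟩ | h | h) | (⟨h1, h2⟩ | h | h) <;> omega⟩

/-- The terminal set `{v_{p-2}, v_{p-1}}` of `G^I_p`. -/
def GIterm (p : ℕ) : Set (Fin p) := {x | x.1 = p - 2 ∨ x.1 = p - 1}

/-!
The vertices `v₀, …, v₃` form a clique, so in every 4-coloring each of them sees the three other
colors and can never be recolored: the restriction to the clique is constant along paths of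
`C₄(G)`, hence on the components of `C^c₄(G, T)`, and it takes all `4!` values. Conversely, any two
colorings that agree on the clique are connected in `C₄(G)`: every later vertex has only two
earlier neighbors, so a recoloring path of `G - v_{p-1}` lifts to `G`, moving `v_{p-1}` out of the
way first whenever it blocks a step. Finally, for each coloring of the clique, `2^q` choices of
the blocks `v_{4j}, …, v_{4j+3}` give colorings in which every non-terminal vertex is frozen;
each of them is a label component on its own, and all of them lie in one component.
-/

abbrev Colorings {W : Type*} (G : SimpleGraph W) (k : ℕ) := {α : W → Fin k // IsColoring G k α}

section Reconfiguration

variable {W : Type*} {G : SimpleGraph W} {k : ℕ}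

theorem colorGraph_reachable_of_forall_ne {α β : Colorings G k} (v : W)
    (h : ∀ w, w ≠ v → α.1 w = β.1 w) : (colorGraph G k).Reachable α β := by
  by_cases hv : α.1 v = β.1 v
  · have hαβ : α = β := Subtype.ext <| funext fun w => by
      by_cases hw : w = v
      · exact hw ▸ hv
      · exact h w hw
    exact hαβ ▸ Reachable.refl _
  · exact Adj.reachable ⟨v, hv, fun w hw => not_imp_comm.1 (h w) hw⟩

def Colorings.recolor [DecidableEq W] (α : Colorings G k) (v : W) (c : Fin k)
    (hc : ∀ w, G.Adj v w → α.1 w ≠ c) : Colorings G k :=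
  ⟨Function.update α.1 v c, by
    intro x y hxy
    rcases eq_or_ne x v with rfl | hx
    · rw [Function.update_self, Function.update_of_ne (G.ne_of_adj hxy).symm]
      exact (hc y hxy).symm
    rcases eq_or_ne y v with rfl | hy
    · rw [Function.update_self, Function.update_of_ne hx]
      exact hc x hxy.symm
    rw [Function.update_of_ne hx, Function.update_of_ne hy]
    exact α.2 x y hxy⟩

theorem Colorings.recolor_val [DecidableEq W] (α : Colorings G k) (v : W) (c : Fin k)
    (hc : ∀ w, G.Adj v w → α.1 w ≠ c) : (α.recolor v c hc).1 = Function.update α.1 v c := rfl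

theorem Colorings.reachable_recolor [DecidableEq W] (α : Colorings G k) (v : W) (c : Fin k)
    (hc : ∀ w, G.Adj v w → α.1 w ≠ c) : (colorGraph G k).Reachable α (α.recolor v c hc) :=
  colorGraph_reachable_of_forall_ne v fun _ hw => (Function.update_of_ne hw _ _).symm

theorem exists_color_ne_of_encard_lt (u : W) (α : W → Fin k) (y : Fin k)
    (hu : (G.neighborSet u).encard + 1 < k) : ∃ z, z ≠ y ∧ ∀ w, G.Adj u w → α w ≠ z := by
  have hlt : (insert y (α '' G.neighborSet u)).encard < (Set.univ : Set (Fin k)).encard := by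
    calc (insert y (α '' G.neighborSet u)).encard
        ≤ (α '' G.neighborSet u).encard + 1 := Set.encard_insert_le _ _
      _ ≤ (G.neighborSet u).encard + 1 := by gcongr; exact Set.encard_image_le _ _
      _ < k := hu
      _ = (Set.univ : Set (Fin k)).encard := by simp
  obtain ⟨z, -, hz⟩ := Set.exists_of_ssubset (Set.ssubset_univ_iff.2 (fun h => hlt.ne (h ▸ rfl)))
  exact ⟨z, fun h => hz (.inl h), fun w hw h => hz (.inr ⟨w, hw, h⟩)⟩

def Colorings.comap {V : Type*} {H : SimpleGraph V} (f : H ↪g G) (α : Colorings G k) :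
    Colorings H k :=
  ⟨α.1 ∘ f, fun _ _ h => α.2 _ _ (f.map_adj_iff.2 h)⟩

variable {V : Type*} {H : SimpleGraph V}

theorem exists_reachable_comap_eq_of_adj (f : H ↪g G) {u : W} (hf : Set.range f = {u}ᶜ)
    (hu : (G.neighborSet u).encard + 1 < k) {α : Colorings G k} {γ : Colorings H k}
    (hγ : (colorGraph H k).Adj (α.comap f) γ) :
    ∃ α' : Colorings G k, (colorGraph G k).Reachable α α' ∧ α'.comap f = γ := by
  classical
  obtain ⟨x, -, hx⟩ := hγ
  have hγx : ∀ x', x' ≠ x → α.1 (f x') = γ.1 x' := fun x' hne =>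
    by_contra fun h => hne (hx x' h)
  have hfu : ∀ x', f x' ≠ u := fun x' => (hf ▸ Set.mem_range_self x' : f x' ∈ ({u}ᶜ : Set W))
  obtain ⟨z, hzy, hz⟩ := exists_color_ne_of_encard_lt u α.1 (γ.1 x) hu
  -- `u` is first moved to a color `z` that is free at `u` and differs from the target color.
  have hfree : ∀ w, G.Adj (f x) w → (α.recolor u z hz).1 w ≠ γ.1 x := by
    intro w hw
    rcases eq_or_ne w u with rfl | hwu
    · rwa [Colorings.recolor_val, Function.update_self]
    obtain ⟨x', rfl⟩ : w ∈ Set.range f := hf ▸ hwu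
    have hxx' : H.Adj x x' := f.map_adj_iff.1 hw
    rw [Colorings.recolor_val, Function.update_of_ne hwu, hγx x' (H.ne_of_adj hxx').symm]
    exact (γ.2 x x' hxx').symm
  refine ⟨(α.recolor u z hz).recolor (f x) (γ.1 x) hfree,
    (α.reachable_recolor u z hz).trans (Colorings.reachable_recolor _ _ _ hfree), ?_⟩
  refine Subtype.ext (funext fun x' => ?_)
  change ((α.recolor u z hz).recolor (f x) (γ.1 x) hfree).1 (f x') = γ.1 x'
  rw [Colorings.recolor_val, Colorings.recolor_val]
  rcases eq_or_ne x' x with rfl | hne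
  · exact Function.update_self _ _ _
  · exact (Function.update_of_ne (f.injective.ne hne) _ _).trans
      ((Function.update_of_ne (hfu x') _ _).trans (hγx x' hne))

theorem colorGraph_reachable_of_reachable_comap (f : H ↪g G) {u : W} (hf : Set.range f = {u}ᶜ)
    (hu : (G.neighborSet u).encard + 1 < k) {α β : Colorings G k}
    (h : (colorGraph H k).Reachable (α.comap f) (β.comap f)) :
    (colorGraph G k).Reachable α β := by
  obtain ⟨p⟩ := h
  suffices ∀ {γ δ} (p : (colorGraph H k).Walk γ δ) (α : Colorings G k),
      α.comap f = γ → δ = β.comap f → (colorGraph G k).Reachable α β from this p α rfl rfl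
  intro γ δ p
  induction p with
  | nil =>
    rintro α rfl hβ
    refine colorGraph_reachable_of_forall_ne u fun w hw => ?_
    obtain ⟨x, rfl⟩ : w ∈ Set.range f := hf ▸ hw
    exact congrFun (congrArg Subtype.val hβ) x
  | cons hadj _ ih =>
    rintro α rfl hδ
    obtain ⟨α', hαα', rfl⟩ := exists_reachable_comap_eq_of_adj f hf hu hadj
    exact hαα'.trans (ih α' rfl hδ)

end Reconfiguration

section Frozen

variable {W : Type*} {G : SimpleGraph W} {k : ℕ}

def IsFrozenAt (G : SimpleGraph W) (k : ℕ) (α : W → Fin k) (v : W) : Prop :=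
  ∀ c, c ≠ α v → ∃ w, G.Adj v w ∧ α w = c

theorem IsFrozenAt.apply_eq_of_adj {α β : Colorings G k} {v : W} (hv : IsFrozenAt G k α.1 v)
    (h : (colorGraph G k).Adj α β) : β.1 v = α.1 v := by
  by_contra hne
  obtain ⟨w, hvw, hw⟩ := hv _ hne
  obtain ⟨x, -, hx⟩ := h
  have hxv : v = x := hx v (Ne.symm hne)
  have hαβ : α.1 w = β.1 w := by_contra fun h => (G.ne_of_adj hvw) (hxv.trans (hx w h).symm)
  exact β.2 v w hvw (hw.symm.trans hαβ)

theorem IsFrozenAt.apply_eq_of_reachable {v : W} (hv : ∀ γ : Colorings G k, IsFrozenAt G k γ.1 v)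
    {α β : Colorings G k} (h : (colorGraph G k).Reachable α β) : α.1 v = β.1 v := by
  obtain ⟨p⟩ := h
  induction p with
  | nil => rfl
  | cons hadj _ ih => exact ((hv _).apply_eq_of_adj hadj).symm.trans ih

theorem IsFrozenAt.of_isClique {s : Finset W} (hs : G.IsClique (s : Set W)) (hcard : s.card = k)
    {α : W → Fin k} (hα : IsColoring G k α) {v : W} (hv : v ∈ s) : IsFrozenAt G k α v := by
  intro c hc
  have hinj : Set.InjOn α s := fun a ha b hb hab => by_contra fun hne => hα a b (hs ha hb hne) hab
  have himage : s.image α = Finset.univ :=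
    Finset.eq_univ_of_card _ (by rw [Finset.card_image_of_injOn hinj, hcard, Fintype.card_fin])
  obtain ⟨w, hw, rfl⟩ := Finset.mem_image.1 (himage ▸ Finset.mem_univ c)
  exact ⟨w, hs hv hw fun h => hc (h ▸ rfl), rfl⟩

theorem IsFrozenAt.of_three_neighbors {α : W → Fin 4} (hα : IsColoring G 4 α) {v u₁ u₂ u₃ : W}
    (h₁ : G.Adj v u₁) (h₂ : G.Adj v u₂) (h₃ : G.Adj v u₃)
    (h₁₂ : α u₁ ≠ α u₂) (h₁₃ : α u₁ ≠ α u₃) (h₂₃ : α u₂ ≠ α u₃) : IsFrozenAt G 4 α v := by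
  intro c hc
  have hv₁ := hα _ _ h₁
  have hv₂ := hα _ _ h₂
  have hv₃ := hα _ _ h₃
  obtain rfl | rfl | rfl : c = α u₁ ∨ c = α u₂ ∨ c = α u₃ := by omega
  exacts [⟨u₁, h₁, rfl⟩, ⟨u₂, h₂, rfl⟩, ⟨u₃, h₃, rfl⟩]

end Frozen

section LabelQuotient

variable {N L : Type*} {H : SimpleGraph N} {f : N → L}

theorem sameLabelSub_le : sameLabelSub H f ≤ H := fun _ _ h => h.1

theorem quotGraph_reachable_mk_iff {a b : N} :
    (quotGraph H f).Reachable ((sameLabelSub H f).connectedComponentMk a)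
      ((sameLabelSub H f).connectedComponentMk b) ↔ H.Reachable a b := by
  constructor
  · rintro ⟨p⟩
    suffices ∀ {c d} (p : (quotGraph H f).Walk c d) (a : N),
        (sameLabelSub H f).connectedComponentMk a = c →
        d = (sameLabelSub H f).connectedComponentMk b → H.Reachable a b from this p a rfl rfl
    intro c d p
    induction p with
    | nil =>
      rintro a rfl hb
      exact (ConnectedComponent.exact hb).mono sameLabelSub_le
    | cons hcd _ ih =>
      rintro a rfl hd
      obtain ⟨-, x, y, hx, rfl, hxy⟩ := hcd
      exact ((ConnectedComponent.exact hx.symm).mono sameLabelSub_le).trans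
        (hxy.reachable.trans (ih y rfl hd))
  · rintro ⟨p⟩
    induction p with
    | nil => rfl
    | @cons a b _ hab _ ih =>
      refine .trans ?_ ih
      by_cases h : (sameLabelSub H f).connectedComponentMk a =
          (sameLabelSub H f).connectedComponentMk b
      · rw [h]
      · exact Adj.reachable ⟨h, a, b, rfl, rfl, hab⟩

theorem eq_of_connectedComponentMk_eq_of_forall_not_adj {G : SimpleGraph N} {a b : N}
    (ha : ∀ c, ¬ G.Adj a c) (h : G.connectedComponentMk a = G.connectedComponentMk b) :
    a = b := by
  obtain ⟨p⟩ := ConnectedComponent.exact h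
  cases p with
  | nil => rfl
  | cons hadj _ => exact absurd hadj (ha _)

end LabelQuotient

section ContractedSolutionGraph

variable {W : Type*} {G : SimpleGraph W} {k : ℕ} {T : Set W}

theorem CSG_connectedComponentMk_csgNode_eq_iff {α β : Colorings G k} :
    (CSG G k T).connectedComponentMk (csgNode G k T α) =
      (CSG G k T).connectedComponentMk (csgNode G k T β) ↔ (colorGraph G k).Reachable α β :=
  ConnectedComponent.eq.trans quotGraph_reachable_mk_iff

theorem eq_of_csgNode_eq_of_isFrozenAt {α β : Colorings G k}
    (hα : ∀ v, v ∉ T → IsFrozenAt G k α.1 v) (h : csgNode G k T α = csgNode G k T β) :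
    α = β := by
  refine eq_of_connectedComponentMk_eq_of_forall_not_adj (fun γ hγ => ?_) h
  obtain ⟨v, hv, -⟩ := hγ.1
  by_cases hvT : v ∈ T
  · exact hv (congrFun hγ.2 ⟨v, hvT⟩)
  · exact hv ((hα v hvT).apply_eq_of_adj hγ.1).symm

end ContractedSolutionGraph

theorem Nat.card_le_ncard_of_injective {α β : Type*} [Finite β] {f : α → β} {s : Set β}
    (hf : Function.Injective f) (hs : ∀ a, f a ∈ s) : Nat.card α ≤ s.ncard :=
  Set.ncard_univ α ▸ Set.ncard_le_ncard_of_injOn f (fun a _ => hs a) hf.injOn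

section GIp

theorem GIp_adj_of_lt_four {p : ℕ} {a b : Fin p} (ha : a.1 < 4) (hb : b.1 < 4) (hab : a ≠ b) :
    (GIp p).Adj a b := by
  have := Fin.val_ne_of_ne hab
  simp only [GIp]
  omega

theorem GIp_isFrozenAt_of_lt_four {p : ℕ} (hp : 4 ≤ p) {α : Fin p → Fin 4}
    (hα : IsColoring (GIp p) 4 α) {v : Fin p} (hv : v.1 < 4) : IsFrozenAt (GIp p) 4 α v := by
  refine IsFrozenAt.of_isClique (s := Finset.univ.map (Fin.castLEEmb hp)) ?_ (by simp) hα
    (Finset.mem_map.2 ⟨⟨v.1, hv⟩, Finset.mem_univ _, rfl⟩)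
  intro a ha b hb hab
  simp only [Finset.coe_map, Finset.coe_univ, Set.image_univ, Set.mem_range] at ha hb
  obtain ⟨i, rfl⟩ := ha
  obtain ⟨j, rfl⟩ := hb
  exact GIp_adj_of_lt_four i.2 j.2 hab

theorem GIp_isFrozenAt {p : ℕ} {α : Fin p → Fin 4} (hα : IsColoring (GIp p) 4 α) {n : ℕ}
    (hn : n + 4 < p)
    (h : α ⟨n, by omega⟩ ≠ α ⟨n + 3, by omega⟩ ∨ α ⟨n + 1, by omega⟩ ≠ α ⟨n + 4, hn⟩) :
    IsFrozenAt (GIp p) 4 α ⟨n + 2, by omega⟩ := by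
  have adj : ∀ a b : Fin p, (b.1 = a.1 + 1 ∨ b.1 = a.1 + 2 ∨ a.1 = b.1 + 1 ∨ a.1 = b.1 + 2) →
      (GIp p).Adj a b := fun a b h => by simp only [GIp]; omega
  rcases h with h | h
  · exact IsFrozenAt.of_three_neighbors (u₁ := ⟨n, by omega⟩) (u₂ := ⟨n + 1, by omega⟩)
      (u₃ := ⟨n + 3, by omega⟩) hα
      (adj _ _ (by simp)) (adj _ _ (by simp)) (adj _ _ (by simp)) (hα _ _ (adj _ _ (by simp))) h
      (hα _ _ (adj _ _ (by simp)))
  · exact IsFrozenAt.of_three_neighbors (u₁ := ⟨n + 1, by omega⟩) (u₂ := ⟨n + 3, by omega⟩)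
      (u₃ := ⟨n + 4, hn⟩)
      hα (adj _ _ (by simp)) (adj _ _ (by simp)) (adj _ _ (by simp)) (hα _ _ (adj _ _ (by simp))) h
      (hα _ _ (adj _ _ (by simp)))

def GIp_castSuccEmb (p : ℕ) : GIp p ↪g GIp (p + 1) := ⟨Fin.castSuccEmb, Iff.rfl⟩

theorem range_GIp_castSuccEmb (p : ℕ) : Set.range (GIp_castSuccEmb p) = {Fin.last p}ᶜ := by
  change Set.range Fin.castSucc = _
  rw [Fin.range_castSucc]
  ext v
  simp [Fin.ext_iff]
  omega

theorem encard_neighborSet_GIp_last_le {p : ℕ} (hp : 4 ≤ p) :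
    ((GIp (p + 1)).neighborSet (Fin.last p)).encard ≤ 2 := by
  have hsub : (GIp (p + 1)).neighborSet (Fin.last p) ⊆ {⟨p - 1, by omega⟩, ⟨p - 2, by omega⟩} := by
    intro w hw
    simp only [mem_neighborSet, GIp, Fin.val_last] at hw
    simp only [Set.mem_insert_iff, Set.mem_singleton_iff, Fin.ext_iff]
    omega
  exact (Set.encard_le_encard hsub).trans ((Set.encard_insert_le _ _).trans (by simp; rfl))

/-- The vertices `v₄, v₅, …` are added one at a time, each with only two earlier neighbors. -/
theorem GIp_reachable_of_forall_lt_four {p : ℕ} {α β : Colorings (GIp p) 4}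
    (h : ∀ v : Fin p, v.1 < 4 → α.1 v = β.1 v) : (colorGraph (GIp p) 4).Reachable α β := by
  induction p with
  | zero => exact Subsingleton.elim α β ▸ .refl _
  | succ p ih =>
    rcases lt_or_ge p 4 with hp | hp
    · exact (Subtype.ext (funext fun v => h v (by omega)) : α = β) ▸ .refl _
    refine colorGraph_reachable_of_reachable_comap (GIp_castSuccEmb p) (range_GIp_castSuccEmb p)
      ?_ (ih fun v hv => h _ hv)
    calc ((GIp (p + 1)).neighborSet (Fin.last p)).encard + 1 ≤ 2 + 1 := by
          gcongr; exact encard_neighborSet_GIp_last_le hp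
      _ < 4 := by norm_num

end GIp

section FrozenFamily

def blockColor (x : Bool) (r : ℕ) : Fin 4 :=
  (bif x then ![0, 2, 1, 3] else ![0, 1, 2, 3]) (Fin.ofNat 4 r)

def colorSeq (bits : ℕ → Bool) (n : ℕ) : Fin 4 := blockColor (bits (n / 4)) n

def twoBlockColor (x y : Bool) (t : ℕ) : Fin 4 :=
  if t < 4 then blockColor x t else blockColor y (t - 4)

theorem colorSeq_add (bits : ℕ → Bool) (n d : ℕ) (hd : n % 4 + d < 8) :
    colorSeq bits (n + d) = twoBlockColor (bits (n / 4)) (bits (n / 4 + 1)) (n % 4 + d) := by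
  unfold colorSeq twoBlockColor
  split_ifs with h
  · rw [show (n + d) / 4 = n / 4 by omega, blockColor, blockColor,
      show Fin.ofNat 4 (n + d) = Fin.ofNat 4 (n % 4 + d) by
        ext; simp only [Fin.val_ofNat]; omega]
  · rw [show (n + d) / 4 = n / 4 + 1 by omega, blockColor, blockColor,
      show Fin.ofNat 4 (n + d) = Fin.ofNat 4 (n % 4 + d - 4) by
        ext; simp only [Fin.val_ofNat]; omega]

/-- The third conjunct, that no two consecutive vertices `n + 3`, `n + 4` both repeat the color
three places back, is what freezes every inner vertex. The offset `s + 0` matches the shape of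
`colorSeq_add`. -/
theorem twoBlockColor_spec (x y : Bool) (s : ℕ) (hs : s < 4) :
    twoBlockColor x y (s + 0) ≠ twoBlockColor x y (s + 1) ∧
      twoBlockColor x y (s + 0) ≠ twoBlockColor x y (s + 2) ∧
      (twoBlockColor x y (s + 0) ≠ twoBlockColor x y (s + 3) ∨
        twoBlockColor x y (s + 1) ≠ twoBlockColor x y (s + 4)) := by
  revert x y s
  decide

theorem colorSeq_spec (bits : ℕ → Bool) (n : ℕ) :
    colorSeq bits n ≠ colorSeq bits (n + 1) ∧ colorSeq bits n ≠ colorSeq bits (n + 2) ∧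
      (colorSeq bits n ≠ colorSeq bits (n + 3) ∨
        colorSeq bits (n + 1) ≠ colorSeq bits (n + 4)) := by
  change colorSeq bits (n + 0) ≠ _ ∧ colorSeq bits (n + 0) ≠ _ ∧ (colorSeq bits (n + 0) ≠ _ ∨ _)
  have hn := Nat.mod_lt n (by norm_num : 4 > 0)
  rw [colorSeq_add bits n 0 (by omega), colorSeq_add bits n 1 (by omega),
    colorSeq_add bits n 2 (by omega), colorSeq_add bits n 3 (by omega),
    colorSeq_add bits n 4 (by omega)]
  exact twoBlockColor_spec _ _ _ hn

theorem colorSeq_zero_ne_three (bits : ℕ → Bool) : colorSeq bits 0 ≠ colorSeq bits 3 := by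
  change blockColor (bits 0) 0 ≠ blockColor (bits 0) 3
  cases bits 0 <;> decide

theorem colorSeq_of_lt_four {bits : ℕ → Bool} (h : bits 0 = false) {n : ℕ} (hn : n < 4) :
    colorSeq bits n = ⟨n, hn⟩ := by
  rw [colorSeq, Nat.div_eq_of_lt hn, h]
  interval_cases n <;> rfl

theorem eq_of_colorSeq_eq {bits bits' : ℕ → Bool} (j : ℕ)
    (h : colorSeq bits (4 * j + 1) = colorSeq bits' (4 * j + 1)) : bits j = bits' j := by
  rw [colorSeq, colorSeq, show (4 * j + 1) / 4 = j by omega, blockColor, blockColor,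
    show Fin.ofNat 4 (4 * j + 1) = 1 by ext; simp only [Fin.val_ofNat]; omega] at h
  revert h
  cases bits j <;> cases bits' j <;> decide

theorem isColoring_GIp_of_seq {p k : ℕ} (c : ℕ → Fin k) (h₁ : ∀ n, c n ≠ c (n + 1))
    (h₂ : ∀ n, c n ≠ c (n + 2)) (h₀₃ : c 0 ≠ c 3) : IsColoring (GIp p) k (fun v => c v.1) := by
  rintro u v ((⟨hu, hv⟩ | hv | hv) | (⟨hv, hu⟩ | hu | hu)) <;> dsimp only
  · rw [hu, hv]; exact h₀₃
  · rw [hv]; exact h₁ _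
  · rw [hv]; exact h₂ _
  · rw [hu, hv]; exact h₀₃.symm
  · rw [hu]; exact (h₁ _).symm
  · rw [hu]; exact (h₂ _).symm

def frozenColoring (p : ℕ) (π : Equiv.Perm (Fin 4)) (bits : ℕ → Bool) : Colorings (GIp p) 4 :=
  ⟨fun v => π (colorSeq bits v.1), isColoring_GIp_of_seq (fun n => π (colorSeq bits n))
    (fun n => π.injective.ne (colorSeq_spec bits n).1)
    (fun n => π.injective.ne (colorSeq_spec bits n).2.1)
    (π.injective.ne (colorSeq_zero_ne_three bits))⟩

variable {p : ℕ} {π : Equiv.Perm (Fin 4)} {bits : ℕ → Bool}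

theorem frozenColoring_apply_of_lt_four (h : bits 0 = false) {v : Fin p} (hv : v.1 < 4) :
    (frozenColoring p π bits).1 v = π ⟨v.1, hv⟩ :=
  congrArg π (colorSeq_of_lt_four h hv)

theorem frozenColoring_isFrozenAt (hp : 4 ≤ p) {v : Fin p} (hv : v.1 + 2 < p) :
    IsFrozenAt (GIp p) 4 (frozenColoring p π bits).1 v := by
  rcases lt_or_ge v.1 4 with h | h
  · exact GIp_isFrozenAt_of_lt_four hp (frozenColoring p π bits).2 h
  have hv' : v = ⟨v.1 - 2 + 2, by omega⟩ := Fin.ext (by simp only; omega)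
  rw [hv']
  exact GIp_isFrozenAt (frozenColoring p π bits).2 (by omega)
    ((colorSeq_spec bits _).2.2.imp π.injective.ne π.injective.ne)

end FrozenFamily

section BlockBits

/-- Block `0` is the clique `v₀ … v₃`; blocks `1, …, q` carry the bits of `b`. -/
def blockBits (q : ℕ) (b : Fin q → Bool) (j : ℕ) : Bool :=
  if h : 0 < j ∧ j ≤ q then b ⟨j - 1, by omega⟩ else false

variable {q : ℕ}

theorem blockBits_zero (b : Fin q → Bool) : blockBits q b 0 = false := rfl

theorem frozenColoring_reachable {p : ℕ} (π : Equiv.Perm (Fin 4)) (b b' : Fin q → Bool) :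
    (colorGraph (GIp p) 4).Reachable (frozenColoring p π (blockBits q b))
      (frozenColoring p π (blockBits q b')) :=
  GIp_reachable_of_forall_lt_four fun _ hv =>
    (frozenColoring_apply_of_lt_four (blockBits_zero b) hv).trans
      (frozenColoring_apply_of_lt_four (blockBits_zero b') hv).symm

theorem eq_of_reachable_frozenColoring {p : ℕ} (hp : 4 ≤ p) {π π' : Equiv.Perm (Fin 4)}
    {b b' : Fin q → Bool}
    (h : (colorGraph (GIp p) 4).Reachable (frozenColoring p π (blockBits q b))
      (frozenColoring p π' (blockBits q b'))) : π = π' :=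
  Equiv.ext fun i => by
    have hi := IsFrozenAt.apply_eq_of_reachable (v := ⟨i.1, by omega⟩)
      (fun γ => GIp_isFrozenAt_of_lt_four hp γ.2 i.2) h
    rwa [frozenColoring_apply_of_lt_four (p := p) (v := ⟨i.1, _⟩) (blockBits_zero b) i.2,
      frozenColoring_apply_of_lt_four (p := p) (v := ⟨i.1, _⟩) (blockBits_zero b') i.2] at hi

theorem eq_of_frozenColoring_eq {p : ℕ} (hp : 4 * q + 2 ≤ p) {π : Equiv.Perm (Fin 4)}
    {b b' : Fin q → Bool}
    (h : frozenColoring p π (blockBits q b) = frozenColoring p π (blockBits q b')) : b = b' :=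
  funext fun i => by
    have hi := congrFun (congrArg Subtype.val h) ⟨4 * (i.1 + 1) + 1, by omega⟩
    simpa [blockBits] using eq_of_colorSeq_eq (i.1 + 1) (π.injective hi)

end BlockBits

/-- for `p = 4q+4`, the contracted solution graph
`C^c_4(G^I_p, {v_{p-2}, v_{p-1}})` has at least `4! = 24` connected components
that each contain at least `2^q` nodes. -/
theorem statement_6 (q p : ℕ) (hp : p = 4 * q + 4) :
    24 ≤ {c : (CSG (GIp p) 4 (GIterm p)).ConnectedComponent |
      2 ^ q ≤ {x : CSGNode (GIp p) 4 (GIterm p) |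
        (CSG (GIp p) 4 (GIterm p)).connectedComponentMk x = c}.ncard}.ncard := by
  subst hp
  let node (π : Equiv.Perm (Fin 4)) (b : Fin q → Bool) :=
    csgNode (GIp (4 * q + 4)) 4 (GIterm (4 * q + 4)) (frozenColoring _ π (blockBits q b))
  let comp (π : Equiv.Perm (Fin 4)) :=
    (CSG (GIp (4 * q + 4)) 4 (GIterm (4 * q + 4))).connectedComponentMk (node π fun _ => false)
  have node_mem (π : Equiv.Perm (Fin 4)) (b : Fin q → Bool) :
      (CSG (GIp (4 * q + 4)) 4 (GIterm (4 * q + 4))).connectedComponentMk (node π b) = comp π :=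
    CSG_connectedComponentMk_csgNode_eq_iff.2 (frozenColoring_reachable π b _)
  have comp_injective : Function.Injective comp := fun _ _ h =>
    eq_of_reachable_frozenColoring (by omega) (CSG_connectedComponentMk_csgNode_eq_iff.1 h)
  have node_injective (π : Equiv.Perm (Fin 4)) : Function.Injective (node π) := fun _ _ h =>
    eq_of_frozenColoring_eq (by omega) <| eq_of_csgNode_eq_of_isFrozenAt
      (fun v hv => frozenColoring_isFrozenAt (by omega) (by simp [GIterm] at hv; omega)) h
  calc 24 = Nat.card (Equiv.Perm (Fin 4)) := by
        rw [Nat.card_eq_fintype_card, Fintype.card_perm, Fintype.card_fin]; rfl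
    _ ≤ _ := Nat.card_le_ncard_of_injective comp_injective fun π =>
      calc 2 ^ q = Nat.card (Fin q → Bool) := by simp
        _ ≤ _ := Nat.card_le_ncard_of_injective (node_injective π) (node_mem π)
end

section
/- Let k ≥ 3, let G = (V,E) be a (k−2)-connected k-colorable chordal graph, and let T be a clique of G with T ≠ V such that (G,T) can be obtained from (G−v, T∖{v}) by an introduce operation. If C^c_k(G−v, T∖{v}) is a (k−2,k)-color-complete graph, then C^c_k(G,T) is a (k−1,k)-color-complete graph. If |T| = k, or C^c_k(G−v, T∖{v}) is a forest that satisfies the injective neighborhood property, then C^c_k(G,T) is a forest that satisfies the injective neighborhood property. -/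
open SimpleGraph

/-- The vertex set of `G - v`. -/
def delSet {V : Type*} (v : V) : Set V := {u | u ≠ v}

/-- The terminal set `T \ {v}`, viewed as a set of vertices of `G - v`. -/
def Tdel {V : Type*} (T : Set V) (v : V) : Set ↥(delSet v) := {u | u.1 ∈ T}

/-!
Since `N(v) = T \ {v}`, a `k`-coloring of `G` is a `k`-coloring `β` of `G - v` together with a
color of `v` that `β` does not use on `T \ {v}`. Hence the label components of `(G, T)` are the
pairs of a label component `x'` of `(G - v, T \ {v})` and a color left free by the label of `x'`,
and two of them are adjacent iff they lie over the same `x'` with different colors of `v`, or over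
adjacent nodes with the same color of `v`. If the labels of `G - v` use `k - 2` colors, every `x'`
has exactly two free colors and two adjacent nodes share exactly one, so `C^c_k(G, T)` doubles each
node along a new edge and lifts each edge once; this preserves forests, the INP and
color-completeness. If `|T| = k`, no color on `T` can be changed, so there are no edges at all.
Finally `k - 1 ≤ |T| ≤ k`: the upper bound by `k`-colorability, the lower one because `T \ {v}`
separates `v` from the vertices outside `T`.
-/

namespace SimpleGraph

variable {N N' : Type*} {H : SimpleGraph N} {F : SimpleGraph N'}

lemma Walk.IsPath.eq_cons_nil_of_mem_edges {a b : N'} {p : F.Walk a b} (hp : p.IsPath)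
    (he : s(a, b) ∈ p.edges) : ∃ h : F.Adj a b, p = .cons h .nil := by
  cases p with
  | nil => simp at he
  | @cons _ c _ h p =>
    rw [Walk.edges_cons, List.mem_cons] at he
    rcases he with he | he
    · obtain rfl : b = c := Sym2.congr_right.mp he
      exact ⟨h, by rw [Walk.eq_nil_iff_nil.mpr (Walk.isPath_iff_nil.mp hp.of_cons)]⟩
    · exact absurd (p.fst_mem_support_of_mem_edges he) ((Walk.cons_isPath_iff h p).mp hp).2

section Collapse

variable {π : N → N'} (hπ : ∀ x y, H.Adj x y → π x = π y ∨ F.Adj (π x) (π y))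

noncomputable def Walk.collapse : ∀ {x y : N}, H.Walk x y → F.Walk (π x) (π y)
  | _, _, .nil => .nil
  | x, _, .cons (v := x₁) h p =>
    haveI := Classical.dec (π x = π x₁)
    if he : π x = π x₁ then (collapse p).copy he.symm rfl
    else .cons ((hπ x x₁ h).resolve_left he) (collapse p)

namespace Walk

variable {hπ}

lemma collapse_cons_of_eq {x x₁ y : N} (h : H.Adj x x₁) (p : H.Walk x₁ y) (he : π x = π x₁) :
    (cons h p).collapse hπ = (p.collapse hπ).copy he.symm rfl := by
  simp [collapse, he]

lemma collapse_cons_of_ne {x x₁ y : N} (h : H.Adj x x₁) (p : H.Walk x₁ y) (he : π x ≠ π x₁) :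
    (cons h p).collapse hπ = .cons ((hπ x x₁ h).resolve_left he) (p.collapse hπ) := by
  simp [collapse, he]

lemma map_mem_support_collapse {x y : N} (p : H.Walk x y) {u : N} (hu : u ∈ p.support) :
    π u ∈ (p.collapse hπ).support := by
  induction p with
  | nil => simp_all [collapse]
  | @cons x x₁ y h p ih =>
    rw [support_cons, List.mem_cons] at hu
    by_cases he : π x = π x₁
    · rw [collapse_cons_of_eq h p he, support_copy]
      rcases hu with rfl | hu
      · rw [he]; exact (p.collapse hπ).start_mem_support
      · exact ih hu
    · rw [collapse_cons_of_ne h p he, support_cons, List.mem_cons]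
      rcases hu with rfl | hu
      · exact Or.inl rfl
      · exact Or.inr (ih hu)

lemma exists_dart_of_mem_darts_collapse {x y : N} (p : H.Walk x y) {d : F.Dart}
    (hd : d ∈ (p.collapse hπ).darts) : ∃ d' ∈ p.darts, π d'.fst = d.fst ∧ π d'.snd = d.snd := by
  induction p with
  | nil => simp [collapse] at hd
  | @cons x x₁ y h p ih =>
    by_cases he : π x = π x₁
    · rw [collapse_cons_of_eq h p he, darts_copy] at hd
      obtain ⟨d', hd', h1, h2⟩ := ih hd
      exact ⟨d', List.mem_cons_of_mem _ hd', h1, h2⟩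
    · rw [collapse_cons_of_ne h p he, darts_cons, List.mem_cons] at hd
      rcases hd with rfl | hd
      · exact ⟨⟨(x, x₁), h⟩, List.mem_cons_self .., rfl, rfl⟩
      · obtain ⟨d', hd', h1, h2⟩ := ih hd
        exact ⟨d', List.mem_cons_of_mem _ hd', h1, h2⟩

lemma IsPath.collapse (hF : F.IsAcyclic)
    (hlift : ∀ x y x' y' : N, H.Adj x y → H.Adj x' y' → π x = π x' → π y = π y' →
      π x ≠ π y → x = x' ∧ y = y')
    {x y : N} {p : H.Walk x y} (hp : p.IsPath) : (p.collapse hπ).IsPath := by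
  classical
  induction p with
  | nil => exact IsPath.nil
  | @cons x x₁ y h p ih =>
    have hxp : x ∉ p.support := ((cons_isPath_iff h p).mp hp).2
    have ihp := ih hp.of_cons
    by_cases he : π x = π x₁
    · rwa [collapse_cons_of_eq h p he, isPath_copy]
    rw [collapse_cons_of_ne h p he, cons_isPath_iff]
    refine ⟨ihp, fun hmem => ?_⟩
    set q := (p.collapse hπ).takeUntil (π x) hmem
    by_cases hedge : s(π x₁, π x) ∈ q.edges
    · -- the unique lift of the edge `π x₁ π x` of the collapse of `p` is `x₁ x`
      obtain ⟨e, hq⟩ := (ihp.takeUntil hmem).eq_cons_nil_of_mem_edges hedge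
      have hd : (⟨(π x₁, π x), e⟩ : F.Dart) ∈ (p.collapse hπ).darts := by
        rw [← (p.collapse hπ).take_spec hmem, darts_append]
        simp [hq]
      obtain ⟨d', hd', h1, h2⟩ := exists_dart_of_mem_darts_collapse p hd
      obtain ⟨-, rfl⟩ := hlift _ _ _ _ d'.adj h.symm h1 h2 (by rw [h1, h2]; exact Ne.symm he)
      exact hxp (p.dart_snd_mem_support_of_mem_darts hd')
    · exact hF _ ((cons_isCycle_iff q ((hπ x x₁ h).resolve_left he)).mpr
        ⟨ihp.takeUntil hmem, by rwa [Sym2.eq_swap]⟩)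

end Walk

end Collapse

namespace Walk

lemma IsPath.map_eq_of_collapse {π : N → N'}
    (hπ : ∀ x y, H.Adj x y → π x = π y ∨ F.Adj (π x) (π y)) (hF : F.IsAcyclic)
    (hlift : ∀ x y x' y' : N, H.Adj x y → H.Adj x' y' → π x = π x' → π y = π y' →
      π x ≠ π y → x = x' ∧ y = y')
    {x y : N} {p : H.Walk x y} (hp : p.IsPath) (hxy : π x = π y) : ∀ u ∈ p.support, π u = π x := by
  have hnil : (p.collapse hπ).copy rfl hxy.symm = .nil :=
    eq_nil_iff_nil.mpr (isPath_iff_nil.mp (by rw [isPath_copy]; exact hp.collapse hF hlift))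
  intro u hu
  have := p.map_mem_support_collapse (hπ := hπ) hu
  rwa [← support_copy _ rfl hxy.symm, hnil, support_nil, List.mem_singleton] at this

end Walk

open Walk in
theorem IsAcyclic.of_collapse {π : N → N'}
    (hπ : ∀ x y, H.Adj x y → π x = π y ∨ F.Adj (π x) (π y)) (hF : F.IsAcyclic)
    (hfibre : ∀ x y z : N, π x = π y → π x = π z → x = y ∨ x = z ∨ y = z)
    (hlift : ∀ x y x' y' : N, H.Adj x y → H.Adj x' y' → π x = π x' → π y = π y' →
      π x ≠ π y → x = x' ∧ y = y') : H.IsAcyclic := by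
  classical
  intro x c hc
  cases c with
  | nil => exact hc.ne_nil rfl
  | @cons _ x₁ _ h q =>
    obtain ⟨hq, hxq⟩ := (cons_isCycle_iff q h).mp hc
    have hqc : (q.collapse hπ).IsPath := hq.collapse hF hlift
    by_cases he : π x = π x₁
    · have hfib := hq.map_eq_of_collapse hπ hF hlift he.symm
      have h3 : 2 < q.support.toFinset.card := by
        rw [List.toFinset_card_of_nodup hq.support_nodup, length_support]
        have := hc.three_le_length
        rw [length_cons] at this
        omega
      obtain ⟨a, ha, b, hb, c, hc', hab, hac, hbc⟩ := Finset.two_lt_card.mp h3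
      rw [List.mem_toFinset] at ha hb hc'
      rcases hfibre a b c ((hfib a ha).trans (hfib b hb).symm)
        ((hfib a ha).trans (hfib c hc').symm) with h | h | h
      exacts [hab h, hac h, hbc h]
    · by_cases hedge : s(π x₁, π x) ∈ (q.collapse hπ).edges
      · obtain ⟨e, hqe⟩ := hqc.eq_cons_nil_of_mem_edges hedge
        obtain ⟨d, hd, h1, h2⟩ :=
          exists_dart_of_mem_darts_collapse (hπ := hπ) q (d := ⟨(π x₁, π x), e⟩) (by simp [hqe])
        obtain ⟨hd1, hd2⟩ := hlift _ _ _ _ d.adj h.symm h1 h2 (by rw [h1, h2]; exact Ne.symm he)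
        have hde : d.edge = s(x, x₁) := by rw [Dart.edge, hd1, hd2, Sym2.eq_swap]
        exact hxq (hde ▸ List.mem_map_of_mem hd)
      · exact hF _ ((cons_isCycle_iff _ ((hπ x x₁ h).resolve_left he)).mpr
          ⟨hqc, by rwa [Sym2.eq_swap]⟩)

end SimpleGraph

namespace Fin

variable {α : Type*} {k : ℕ} {f g : α → Fin k}

lemma eq_or_eq_or_eq_of_notMem_range (hf : f.Injective) (hcard : Nat.card α + 2 = k)
    {a b c : Fin k} (ha : a ∉ Set.range f) (hb : b ∉ Set.range f) (hc : c ∉ Set.range f) :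
    a = b ∨ a = c ∨ b = c := by
  have htwo : (Set.range f)ᶜ.ncard = 2 := by
    rw [Set.ncard_compl, Set.ncard_range_of_injective hf, Nat.card_eq_fintype_card,
      Fintype.card_fin]
    omega
  by_contra! h
  have := (Set.two_lt_ncard_iff (s := (Set.range f)ᶜ)).mpr ⟨a, b, c, ha, hb, hc, h.1, h.2.1, h.2.2⟩
  omega

lemma apply_notMem_range_of_existsUnique_ne (hg : g.Injective) {s₀ : α} (hs₀ : f s₀ ≠ g s₀)
    (hu : ∀ s, f s ≠ g s → s = s₀) : g s₀ ∉ Set.range f := by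
  rintro ⟨s, hs⟩
  by_cases h : s = s₀
  · exact hs₀ (h ▸ hs)
  · have hfs : f s = g s := by_contra fun hne => h (hu s hne)
    exact h (hg (hfs.symm.trans hs))

lemma eq_of_notMem_range_of_existsUnique_ne (hf : f.Injective) (hg : g.Injective)
    (hcard : Nat.card α + 2 = k) (hfg : ∃! s, f s ≠ g s) {a b : Fin k}
    (ha : a ∉ Set.range f ∪ Set.range g) (hb : b ∉ Set.range f ∪ Set.range g) : a = b := by
  obtain ⟨s₀, hs₀, hu⟩ := hfg
  have hc := apply_notMem_range_of_existsUnique_ne hg hs₀ hu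
  rw [Set.mem_union, not_or] at ha hb
  have hca : a ≠ g s₀ := fun h => ha.2 ⟨s₀, h.symm⟩
  have hcb : b ≠ g s₀ := fun h => hb.2 ⟨s₀, h.symm⟩
  rcases eq_or_eq_or_eq_of_notMem_range hf hcard ha.1 hb.1 hc with h | h | h
  exacts [h, absurd h hca, absurd h hcb]

end Fin

abbrev ProperColoring {W : Type*} (G : SimpleGraph W) (k : ℕ) :=
  {α : W → Fin k // IsColoring G k α}

section ContractedSolutionGraph

variable {W : Type*} {G : SimpleGraph W} {k : ℕ} {T : Set W}

@[simp] lemma csgLabel_csgNode (γ : ProperColoring G k) :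
    csgLabel G k T (csgNode G k T γ) = csgLabelFun G k T γ := rfl

lemma csgNode_surjective : Function.Surjective (csgNode G k T) :=
  fun x => x.exists_rep

lemma csgNode_eq_of_adj {γ δ : ProperColoring G k} (h : (colorGraph G k).Adj γ δ)
    (hlab : csgLabelFun G k T γ = csgLabelFun G k T δ) : csgNode G k T γ = csgNode G k T δ :=
  ConnectedComponent.connectedComponentMk_eq_of_adj ⟨h, hlab⟩

lemma IsColoring.injOn_of_isClique {α : W → Fin k} (hα : IsColoring G k α)
    (hT : G.IsClique T) : Set.InjOn α T :=
  fun s hs t ht h => by_contra fun hne => hα s t (hT hs ht hne) h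

lemma ncard_le_of_isClique {α : W → Fin k} (hα : IsColoring G k α) (hT : G.IsClique T) :
    T.ncard ≤ k := by
  simpa [Nat.card_coe_set_eq] using
    Nat.card_le_card_of_injective _ (hα.injOn_of_isClique hT).injective

lemma csgLabel_injective (hT : G.IsClique T) (x : CSGNode G k T) :
    Function.Injective (csgLabel G k T x) := by
  obtain ⟨γ, rfl⟩ := csgNode_surjective x
  exact (γ.2.injOn_of_isClique hT).injective

lemma existsUnique_csgLabel_ne_of_adj {x y : CSGNode G k T} (h : (CSG G k T).Adj x y) :
    ∃! t, csgLabel G k T x t ≠ csgLabel G k T y t := by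
  obtain ⟨hne, γ, δ, rfl, rfl, hadj⟩ := h
  obtain ⟨t, ht⟩ := Function.ne_iff.mp fun hlab => hne (csgNode_eq_of_adj hadj hlab)
  obtain ⟨w, -, hw⟩ := hadj
  exact ⟨t, ht, fun s hs => Subtype.ext ((hw _ hs).trans (hw _ ht).symm)⟩

lemma csgLabel_ne_of_adj {x y : CSGNode G k T} (h : (CSG G k T).Adj x y) :
    csgLabel G k T x ≠ csgLabel G k T y := by
  obtain ⟨t, ht, -⟩ := existsUnique_csgLabel_ne_of_adj h
  exact fun hxy => ht (congrFun hxy t)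

/-- With `|T| = k` every label uses all colors, so no single color on `T` can be changed. -/
lemma csg_eq_bot_of_ncard_eq (hT : G.IsClique T) (hcard : T.ncard = k) : CSG G k T = ⊥ := by
  ext x y
  simp only [bot_adj, iff_false]
  intro h
  obtain ⟨t₀, ht₀, hu⟩ := existsUnique_csgLabel_ne_of_adj h
  have hsurj := ((csgLabel_injective hT x).bijective_of_nat_card_le
    (by rw [Nat.card_coe_set_eq, hcard, Nat.card_eq_fintype_card, Fintype.card_fin])).2
  exact Fin.apply_notMem_range_of_existsUnique_ne (csgLabel_injective hT y) ht₀ hu (hsurj _)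

end ContractedSolutionGraph

section Introduce

variable {V : Type*} {G : SimpleGraph V} {k : ℕ} {T : Set V} {v : V}

def Tdel.incl (T : Set V) (v : V) : Tdel T v → T := fun t => ⟨t.1.1, t.2⟩

lemma Tdel.incl_injective : Function.Injective (Tdel.incl T v) := by
  rintro ⟨⟨a, _⟩, _⟩ ⟨⟨b, _⟩, _⟩ h
  obtain rfl : a = b := congrArg Subtype.val h
  rfl

lemma Tdel.incl_ne (hv : v ∈ T) (t : Tdel T v) : Tdel.incl T v t ≠ ⟨v, hv⟩ :=
  fun h => t.1.2 (congrArg Subtype.val h)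

lemma ncard_Tdel_add_one [Finite V] (hv : v ∈ T) : (Tdel T v).ncard + 1 = T.ncard := by
  have himg : Subtype.val '' Tdel T v = T \ {v} := by
    ext w
    exact ⟨fun ⟨u, hu, hw⟩ => hw ▸ ⟨hu, u.2⟩, fun ⟨hw, hwv⟩ => ⟨⟨w, hwv⟩, hw, rfl⟩⟩
  rw [← Set.ncard_image_of_injective _ Subtype.val_injective, himg,
    Set.ncard_sdiff_singleton_add_one hv]

lemma isClique_Tdel (hT : G.IsClique T) : (G.induce (delSet v)).IsClique (Tdel T v) :=
  fun _ h₁ _ h₂ hne => hT h₁ h₂ (Subtype.coe_ne_coe.mpr hne)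

lemma isVertexCut_diff_singleton (hTne : T ≠ Set.univ) (hv : v ∈ T)
    (hN : ∀ u, G.Adj v u → u ∈ T) : IsVertexCut G (T \ {v}) := by
  obtain ⟨w, hw⟩ := (Set.ne_univ_iff_exists_notMem T).mp hTne
  intro hpre
  obtain ⟨p⟩ := hpre ⟨v, by simp⟩ ⟨w, by simp [hw]⟩
  have hadj := p.adj_snd (Walk.not_nil_of_ne fun h => hw (Subtype.mk.inj h ▸ hv))
  exact p.snd.2 ⟨hN _ hadj, (G.ne_of_adj hadj).symm⟩

variable (hN : ∀ u, G.Adj v u → u ∈ T)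

open Classical in
/-- Since `N(v) ⊆ T`, a color of `v` is admissible as soon as it is not used on `T \ {v}`. -/
noncomputable def extendColoring (β : ProperColoring (G.induce (delSet v)) k) (c : Fin k)
    (hc : c ∉ Set.range (csgLabelFun (G.induce (delSet v)) k (Tdel T v) β)) :
    ProperColoring G k :=
  ⟨fun u => if h : u = v then c else β.1 ⟨u, h⟩, by
    have hβc : ∀ u (hu : u ≠ v), G.Adj v u → β.1 ⟨u, hu⟩ ≠ c :=
      fun u hu h e => hc ⟨⟨⟨u, hu⟩, hN u h⟩, e⟩
    intro u w h
    by_cases hu : u = v <;> by_cases hw : w = v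
    · exact absurd (hu.trans hw.symm) h.ne
    · subst hu
      simpa [hw] using (hβc w hw h).symm
    · subst hw
      simpa [hu] using hβc u hu h.symm
    · simpa [hu, hw] using β.2 ⟨u, hu⟩ ⟨w, hw⟩ h⟩

variable {hN} {β β₁ β₂ : ProperColoring (G.induce (delSet v)) k} {c : Fin k}

@[simp] lemma extendColoring_apply_self
    (hc : c ∉ Set.range (csgLabelFun (G.induce (delSet v)) k (Tdel T v) β)) :
    (extendColoring hN β c hc).1 v = c :=
  dif_pos rfl

lemma extendColoring_apply_of_ne
    (hc : c ∉ Set.range (csgLabelFun (G.induce (delSet v)) k (Tdel T v) β)) {u : V} (h : u ≠ v) :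
    (extendColoring hN β c hc).1 u = β.1 ⟨u, h⟩ :=
  dif_neg h

@[simp] lemma restrictColoring_extendColoring
    (hc : c ∉ Set.range (csgLabelFun (G.induce (delSet v)) k (Tdel T v) β)) :
    restrictColoring G k (delSet v) (extendColoring hN β c hc) = β :=
  Subtype.ext (funext fun u => extendColoring_apply_of_ne (hN := hN) hc u.2)

lemma extendColoring_restrictColoring (γ : ProperColoring G k) (hγ : γ.1 v = c)
    (hc : c ∉ Set.range (csgLabelFun (G.induce (delSet v)) k (Tdel T v)
      (restrictColoring G k (delSet v) γ))) :
    extendColoring hN (restrictColoring G k (delSet v) γ) c hc = γ := by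
  subst hγ
  refine Subtype.ext (funext fun u => ?_)
  by_cases h : u = v
  · subst h
    exact extendColoring_apply_self hc
  · exact extendColoring_apply_of_ne hc h

lemma apply_notMem_range_restrictColoring (hT : G.IsClique T) (hv : v ∈ T)
    (γ : ProperColoring G k) : γ.1 v ∉ Set.range (csgLabelFun (G.induce (delSet v)) k (Tdel T v)
      (restrictColoring G k (delSet v) γ)) :=
  fun ⟨t, ht⟩ => γ.2 _ _ (hT t.2 hv t.1.2) ht

lemma colorGraph_adj_restrictColoring {γ δ : ProperColoring G k} (h : (colorGraph G k).Adj γ δ)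
    (hv : γ.1 v = δ.1 v) :
    (colorGraph (G.induce (delSet v)) k).Adj
      (restrictColoring G k (delSet v) γ) (restrictColoring G k (delSet v) δ) := by
  obtain ⟨w, hw, hu⟩ := h
  have hwv : w ≠ v := fun h => hw (h ▸ hv)
  exact ⟨⟨w, hwv⟩, hw, fun u hu' => Subtype.ext (hu _ hu')⟩

lemma colorGraph_adj_extendColoring (h : (colorGraph (G.induce (delSet v)) k).Adj β₁ β₂)
    (h₁ : c ∉ Set.range (csgLabelFun (G.induce (delSet v)) k (Tdel T v) β₁))
    (h₂ : c ∉ Set.range (csgLabelFun (G.induce (delSet v)) k (Tdel T v) β₂)) :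
    (colorGraph G k).Adj (extendColoring hN β₁ c h₁) (extendColoring hN β₂ c h₂) := by
  obtain ⟨u, hu, hu'⟩ := h
  refine ⟨u, ?_, fun w (hw : (extendColoring hN β₁ c h₁).1 w ≠ _) => ?_⟩
  · show (extendColoring hN β₁ c h₁).1 u ≠ (extendColoring hN β₂ c h₂).1 u
    rwa [extendColoring_apply_of_ne _ u.2, extendColoring_apply_of_ne _ u.2]
  by_cases hwv : w = v
  · subst hwv
    simp at hw
  · rw [extendColoring_apply_of_ne _ hwv, extendColoring_apply_of_ne _ hwv] at hw
    exact congrArg Subtype.val (hu' _ hw)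

lemma csgLabelFun_extendColoring_congr
    (h : csgLabelFun (G.induce (delSet v)) k (Tdel T v) β₁ =
      csgLabelFun (G.induce (delSet v)) k (Tdel T v) β₂)
    (h₁ : c ∉ Set.range (csgLabelFun (G.induce (delSet v)) k (Tdel T v) β₁))
    (h₂ : c ∉ Set.range (csgLabelFun (G.induce (delSet v)) k (Tdel T v) β₂)) :
    csgLabelFun G k T (extendColoring hN β₁ c h₁) =
      csgLabelFun G k T (extendColoring hN β₂ c h₂) := by
  funext t
  by_cases ht : t.1 = v
  · simp [csgLabelFun, ht]
  · simpa [csgLabelFun, extendColoring_apply_of_ne _ ht] using congrFun h ⟨⟨t, ht⟩, t.2⟩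

lemma reachable_extendColoring
    (h : (sameLabelSub (colorGraph (G.induce (delSet v)) k)
      (csgLabelFun (G.induce (delSet v)) k (Tdel T v))).Reachable β₁ β₂)
    (h₁ : c ∉ Set.range (csgLabelFun (G.induce (delSet v)) k (Tdel T v) β₁))
    (h₂ : c ∉ Set.range (csgLabelFun (G.induce (delSet v)) k (Tdel T v) β₂)) :
    (sameLabelSub (colorGraph G k) (csgLabelFun G k T)).Reachable
      (extendColoring hN β₁ c h₁) (extendColoring hN β₂ c h₂) := by
  obtain ⟨p⟩ := h
  induction p with
  | nil => rfl
  | cons hadj _ ih =>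
    have h' := hadj.2 ▸ h₁
    have hstep : (sameLabelSub (colorGraph G k) (csgLabelFun G k T)).Adj
        (extendColoring hN _ c h₁) (extendColoring hN _ c h') :=
      ⟨colorGraph_adj_extendColoring hadj.1 h₁ h', csgLabelFun_extendColoring_congr hadj.2 h₁ h'⟩
    exact hstep.reachable.trans (ih h' h₂)

end Introduce

section IntroduceNodes

variable {V : Type*} {G : SimpleGraph V} {k : ℕ} {T : Set V} {v : V}

def restrictHom (hv : v ∈ T) :
    sameLabelSub (colorGraph G k) (csgLabelFun G k T) →g
      sameLabelSub (colorGraph (G.induce (delSet v)) k)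
        (csgLabelFun (G.induce (delSet v)) k (Tdel T v)) where
  toFun := restrictColoring G k (delSet v)
  map_rel' h := ⟨colorGraph_adj_restrictColoring h.1 (congrFun h.2 ⟨v, hv⟩),
    funext fun t => congrFun h.2 (Tdel.incl T v t)⟩

def resNode (hv : v ∈ T) : CSGNode G k T → CSGNode (G.induce (delSet v)) k (Tdel T v) :=
  ConnectedComponent.map (restrictHom hv)

def vColor (hv : v ∈ T) (x : CSGNode G k T) : Fin k :=
  csgLabel G k T x ⟨v, hv⟩

variable (hv : v ∈ T)

@[simp] lemma resNode_csgNode (γ : ProperColoring G k) :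
    resNode hv (csgNode G k T γ) =
      csgNode (G.induce (delSet v)) k (Tdel T v) (restrictColoring G k (delSet v) γ) :=
  rfl

@[simp] lemma vColor_csgNode (γ : ProperColoring G k) : vColor hv (csgNode G k T γ) = γ.1 v :=
  rfl

lemma csgLabel_resNode (x : CSGNode G k T) :
    csgLabel (G.induce (delSet v)) k (Tdel T v) (resNode hv x) =
      csgLabel G k T x ∘ Tdel.incl T v := by
  obtain ⟨γ, rfl⟩ := csgNode_surjective x
  rfl

variable {hv}

lemma csgLabel_eq_iff {x : CSGNode G k T} {f : T → Fin k} :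
    csgLabel G k T x = f ↔
      csgLabel (G.induce (delSet v)) k (Tdel T v) (resNode hv x) = f ∘ Tdel.incl T v ∧
        vColor hv x = f ⟨v, hv⟩ := by
  rw [csgLabel_resNode]
  refine ⟨fun h => h ▸ ⟨rfl, rfl⟩, fun ⟨h₁, h₂⟩ => funext fun t => ?_⟩
  by_cases ht : t.1 = v
  · obtain rfl : t = ⟨v, hv⟩ := Subtype.ext ht
    exact h₂
  · exact congrFun h₁ ⟨⟨t, ht⟩, t.2⟩

variable (hT : G.IsClique T) (hN : ∀ u, G.Adj v u → u ∈ T)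
include hT

lemma vColor_notMem_range (x : CSGNode G k T) :
    vColor hv x ∉ Set.range (csgLabel (G.induce (delSet v)) k (Tdel T v) (resNode hv x)) := by
  obtain ⟨γ, rfl⟩ := csgNode_surjective x
  exact apply_notMem_range_restrictColoring hT hv γ

lemma vColor_notMem_range_csgLabelFun {x : CSGNode G k T}
    {β : ProperColoring (G.induce (delSet v)) k}
    (hβ : csgNode (G.induce (delSet v)) k (Tdel T v) β = resNode hv x) :
    vColor hv x ∉ Set.range (csgLabelFun (G.induce (delSet v)) k (Tdel T v) β) := by
  rw [← csgLabel_csgNode, hβ]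
  exact vColor_notMem_range hT x

include hN

lemma eq_of_resNode_eq_of_vColor_eq {x y : CSGNode G k T} (hres : resNode hv x = resNode hv y)
    (hcol : vColor hv x = vColor hv y) : x = y := by
  obtain ⟨γ, rfl⟩ := csgNode_surjective x
  obtain ⟨δ, rfl⟩ := csgNode_surjective y
  rw [resNode_csgNode, resNode_csgNode] at hres
  rw [vColor_csgNode, vColor_csgNode] at hcol
  have hδ := apply_notMem_range_restrictColoring hT hv δ
  rw [← hcol] at hδ
  have h := reachable_extendColoring (hN := hN) (ConnectedComponent.exact hres)
    (apply_notMem_range_restrictColoring hT hv γ) hδ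
  rw [extendColoring_restrictColoring γ rfl, extendColoring_restrictColoring δ hcol.symm] at h
  exact ConnectedComponent.sound h

end IntroduceNodes

section IntroduceAdj

variable {V : Type*} {G : SimpleGraph V} {k : ℕ} {T : Set V} {v : V} {hv : v ∈ T}

lemma exists_resNode_eq_vColor_eq (hN : ∀ u, G.Adj v u → u ∈ T)
    {x' : CSGNode (G.induce (delSet v)) k (Tdel T v)} {c : Fin k}
    (hc : c ∉ Set.range (csgLabel (G.induce (delSet v)) k (Tdel T v) x')) :
    ∃ x : CSGNode G k T, resNode hv x = x' ∧ vColor hv x = c := by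
  obtain ⟨β, rfl⟩ := csgNode_surjective x'
  rw [csgLabel_csgNode] at hc
  exact ⟨csgNode G k T (extendColoring hN β c hc),
    by rw [resNode_csgNode, restrictColoring_extendColoring], extendColoring_apply_self hc⟩

variable (hT : G.IsClique T) (hN : ∀ u, G.Adj v u → u ∈ T)
include hT hN

lemma csgNode_extendColoring {x : CSGNode G k T} {β : ProperColoring (G.induce (delSet v)) k}
    (hβ : csgNode (G.induce (delSet v)) k (Tdel T v) β = resNode hv x) {c : Fin k}
    (hc : c ∉ Set.range (csgLabelFun (G.induce (delSet v)) k (Tdel T v) β))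
    (hcx : vColor hv x = c) : csgNode G k T (extendColoring hN β c hc) = x :=
  eq_of_resNode_eq_of_vColor_eq (hv := hv) hT hN (by rwa [resNode_csgNode,
    restrictColoring_extendColoring]) (by rw [vColor_csgNode, extendColoring_apply_self, hcx])

lemma csg_adj_of_resNode_eq {x y : CSGNode G k T} (hres : resNode hv x = resNode hv y)
    (hcol : vColor hv x ≠ vColor hv y) : (CSG G k T).Adj x y := by
  obtain ⟨γ, rfl⟩ := csgNode_surjective x
  have hc := vColor_notMem_range_csgLabelFun hT hres
  refine ⟨fun h => hcol (h ▸ rfl), γ, _, rfl, csgNode_extendColoring hT hN hres hc rfl, v,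
    by simpa using hcol, fun u hu => by_contra fun h => hu ?_⟩
  rw [extendColoring_apply_of_ne _ h]
  rfl

lemma csg_adj_of_adj_resNode {x y : CSGNode G k T}
    (hadj : (CSG (G.induce (delSet v)) k (Tdel T v)).Adj (resNode hv x) (resNode hv y))
    (hcol : vColor hv x = vColor hv y) : (CSG G k T).Adj x y := by
  obtain ⟨hne, β₁, β₂, h₁, h₂, hβ⟩ := hadj
  have hc₁ := vColor_notMem_range_csgLabelFun hT h₁
  have hc₂ := vColor_notMem_range_csgLabelFun hT h₂
  rw [← hcol] at hc₂
  exact ⟨fun h => hne (h ▸ rfl), _, _, csgNode_extendColoring hT hN h₁ hc₁ rfl,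
    csgNode_extendColoring hT hN h₂ hc₂ hcol.symm, colorGraph_adj_extendColoring hβ hc₁ hc₂⟩

theorem csg_adj_iff {x y : CSGNode G k T} :
    (CSG G k T).Adj x y ↔
      (resNode hv x = resNode hv y ∧ vColor hv x ≠ vColor hv y) ∨
        ((CSG (G.induce (delSet v)) k (Tdel T v)).Adj (resNode hv x) (resNode hv y) ∧
          vColor hv x = vColor hv y) := by
  refine ⟨fun h => ?_, fun h => h.elim (fun h => csg_adj_of_resNode_eq hT hN h.1 h.2)
    (fun h => csg_adj_of_adj_resNode hT hN h.1 h.2)⟩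
  obtain ⟨hne, γ, δ, rfl, rfl, hadj⟩ := h
  by_cases hcol : γ.1 v = δ.1 v
  · exact Or.inr ⟨⟨fun hres => hne (eq_of_resNode_eq_of_vColor_eq hT hN hres hcol), _, _, rfl,
      rfl, colorGraph_adj_restrictColoring hadj hcol⟩, hcol⟩
  · obtain ⟨w, -, hw⟩ := hadj
    refine Or.inl ⟨congrArg (csgNode _ _ _) (Subtype.ext (funext fun u => ?_)), hcol⟩
    by_contra h
    exact u.2 ((hw _ h).trans (hw _ hcol).symm)

end IntroduceAdj

section IntroduceInvariants

variable {V : Type*} {G : SimpleGraph V} {k : ℕ} {T : Set V} {v : V}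
  (hT : G.IsClique T) (hv : v ∈ T) (hN : ∀ u, G.Adj v u → u ∈ T)
include hT hv hN

theorem isColorComplete_of_introduce
    (hcc : IsColorComplete k (CSG (G.induce (delSet v)) k (Tdel T v))
      (csgLabel (G.induce (delSet v)) k (Tdel T v))) :
    IsColorComplete k (CSG G k T) (csgLabel G k T) := by
  obtain ⟨hinj, hcomplete, hadj⟩ := hcc
  refine ⟨csgLabel_injective hT, fun f hf => ?_,
    fun x y => ⟨existsUnique_csgLabel_ne_of_adj, fun hxy => ?_⟩⟩
  · obtain ⟨x', hx', hu⟩ := hcomplete (f ∘ Tdel.incl T v) (hf.comp Tdel.incl_injective)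
    have hc : f ⟨v, hv⟩ ∉ Set.range (csgLabel _ _ _ x') := by
      rw [hx']
      rintro ⟨t, ht⟩
      exact Tdel.incl_ne hv t (hf ht)
    obtain ⟨x, hres, hcol⟩ := exists_resNode_eq_vColor_eq (hv := hv) hN hc
    refine ⟨x, csgLabel_eq_iff.mpr ⟨hres ▸ hx', hcol⟩, fun y hy => ?_⟩
    obtain ⟨hy₁, hy₂⟩ := csgLabel_eq_iff.mp hy
    exact eq_of_resNode_eq_of_vColor_eq hT hN ((hu _ hy₁).trans hres.symm) (hy₂.trans hcol.symm)
  obtain ⟨t₀, ht₀, hu⟩ := hxy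
  by_cases ht₀v : t₀ = ⟨v, hv⟩
  · have hlab : csgLabel _ _ _ (resNode hv x) = csgLabel _ _ _ (resNode hv y) := by
      rw [csgLabel_resNode, csgLabel_resNode]
      funext t
      by_contra h
      exact Tdel.incl_ne hv t ((hu _ h).trans ht₀v)
    refine csg_adj_of_resNode_eq hT hN ?_ (ht₀v ▸ ht₀)
    exact (hcomplete _ (hinj _)).unique hlab rfl
  · have hcol : vColor hv x = vColor hv y := by_contra fun h => ht₀v (hu _ h).symm
    have ht₀' : t₀.1 ≠ v := fun h => ht₀v (Subtype.ext h)
    refine csg_adj_of_adj_resNode hT hN ((hadj _ _).mpr ⟨⟨⟨t₀, ht₀'⟩, t₀.2⟩, ?_, fun s hs => ?_⟩) hcol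
    · rwa [csgLabel_resNode, csgLabel_resNode]
    · rw [csgLabel_resNode, csgLabel_resNode] at hs
      exact Tdel.incl_injective (hu _ hs)

theorem isAcyclic_of_introduce (hcard : Nat.card (Tdel T v) + 2 = k)
    (hF : IsAcyclic (CSG (G.induce (delSet v)) k (Tdel T v))) : IsAcyclic (CSG G k T) := by
  have hinj := csgLabel_injective (k := k) (isClique_Tdel (v := v) hT)
  have hfree := vColor_notMem_range (hv := hv) (k := k) hT
  refine IsAcyclic.of_collapse (π := resNode hv)
    (fun x y h => ((csg_adj_iff hT hN).mp h).imp And.left And.left) hF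
    (fun x y z hxy hxz => ?_) (fun x y x' y' hxy hxy' hx hy hne => ?_)
  · rcases Fin.eq_or_eq_or_eq_of_notMem_range (hinj _) hcard (hfree x) (hxy ▸ hfree y)
      (hxz ▸ hfree z) with h | h | h
    · exact Or.inl (eq_of_resNode_eq_of_vColor_eq hT hN hxy h)
    · exact Or.inr (Or.inl (eq_of_resNode_eq_of_vColor_eq hT hN hxz h))
    · exact Or.inr (Or.inr (eq_of_resNode_eq_of_vColor_eq hT hN (hxy.symm.trans hxz) h))
  obtain ⟨hadj, hcol⟩ := ((csg_adj_iff hT hN).mp hxy).resolve_left fun h => hne h.1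
  obtain ⟨-, hcol'⟩ := ((csg_adj_iff hT hN).mp hxy').resolve_left fun h =>
    hne (hx.trans (h.1.trans hy.symm))
  have hxx' : vColor hv x = vColor hv x' := by
    refine Fin.eq_of_notMem_range_of_existsUnique_ne (hinj _) (hinj _) hcard
      (existsUnique_csgLabel_ne_of_adj hadj) ?_ ?_
    · exact fun h => h.elim (hfree x) (hcol ▸ hfree y)
    · rw [hx, hy]
      exact fun h => h.elim (hfree x') (hcol' ▸ hfree y')
  exact ⟨eq_of_resNode_eq_of_vColor_eq hT hN hx hxx',
    eq_of_resNode_eq_of_vColor_eq hT hN hy (hcol.symm.trans (hxx'.trans hcol'))⟩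

theorem inp_of_introduce
    (hinp : INP (CSG (G.induce (delSet v)) k (Tdel T v))
      (csgLabel (G.induce (delSet v)) k (Tdel T v))) :
    INP (CSG G k T) (csgLabel G k T) := by
  intro u a b hua hub hne hab
  have hcol : vColor hv a = vColor hv b := congrFun hab ⟨v, hv⟩
  have hlab : csgLabel _ _ _ (resNode hv a) = csgLabel _ _ _ (resNode hv b) := by
    rw [csgLabel_resNode, csgLabel_resNode, hab]
  have hres : resNode hv a ≠ resNode hv b :=
    fun h => hne (eq_of_resNode_eq_of_vColor_eq hT hN h hcol)
  rcases (csg_adj_iff hT hN).mp hua with ⟨ha, -⟩ | ⟨ha, -⟩ <;>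
    rcases (csg_adj_iff hT hN).mp hub with ⟨hb, -⟩ | ⟨hb, -⟩
  · exact hres (ha.symm.trans hb)
  · exact csgLabel_ne_of_adj hb (by rw [ha, hlab])
  · exact csgLabel_ne_of_adj ha (by rw [hb, hlab])
  · exact hinp _ _ _ ha hb hres hlab

end IntroduceInvariants

theorem statement_12_general {V : Type} [Fintype V] (G : SimpleGraph V)
    (k : ℕ) (hk : 3 ≤ k) (hconn : LConnected G (k - 2))
    (hcol : ∃ α : V → Fin k, IsColoring G k α)
    (T : Set V) (hT : G.IsClique T) (hTne : T ≠ Set.univ) (v : V) (hv : v ∈ T)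
    (hN : ∀ u : V, G.Adj v u → u ∈ T) :
    (((Tdel T v).ncard = k - 2 ∧
        IsColorComplete k (CSG (G.induce (delSet v)) k (Tdel T v))
          (csgLabel (G.induce (delSet v)) k (Tdel T v))) →
      (T.ncard = k - 1 ∧ IsColorComplete k (CSG G k T) (csgLabel G k T))) ∧
    ((T.ncard = k ∨
        (IsAcyclic (CSG (G.induce (delSet v)) k (Tdel T v)) ∧
          INP (CSG (G.induce (delSet v)) k (Tdel T v))
            (csgLabel (G.induce (delSet v)) k (Tdel T v)))) →
      (IsAcyclic (CSG G k T) ∧ INP (CSG G k T) (csgLabel G k T))) := by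
  have hdel : (Tdel T v).ncard + 1 = T.ncard := ncard_Tdel_add_one hv
  refine ⟨fun ⟨hcard, hcc⟩ => ⟨by omega, isColorComplete_of_introduce hT hv hN hcc⟩, fun h => ?_⟩
  by_cases hTk : T.ncard = k
  · rw [csg_eq_bot_of_ncard_eq hT hTk]
    exact ⟨isAcyclic_bot, fun _ _ _ h => by simp at h⟩
  obtain ⟨hF, hinp⟩ := h.resolve_left hTk
  obtain ⟨α, hα⟩ := hcol
  have hle : T.ncard ≤ k := ncard_le_of_isClique hα hT
  have hcut : k - 2 ≤ (T \ {v}).ncard := hconn.2.2 _ (isVertexCut_diff_singleton hTne hv hN)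
  rw [Set.ncard_sdiff_singleton_of_mem hv] at hcut
  have hcard : Nat.card (Tdel T v) + 2 = k := by
    rw [Nat.card_coe_set_eq]
    omega
  exact ⟨isAcyclic_of_introduce hT hv hN hcard hF, inp_of_introduce hT hv hN hinp⟩

/-- the introduce operation preserves the invariant for `(k−2)`-connected
`k`-colorable chordal graphs: if `C^c_k(G−v, T∖{v})` is a `(k−2,k)`-color-complete
graph then `C^c_k(G,T)` is a `(k−1,k)`-color-complete graph, and if `|T| = k` or
`C^c_k(G−v, T∖{v})` is a forest satisfying the INP, then `C^c_k(G,T)` is a forest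
satisfying the INP. -/
theorem statement_12 {V : Type} [Fintype V] [DecidableEq V] (G : SimpleGraph V)
    (k : ℕ) (hk : 3 ≤ k) (hconn : LConnected G (k - 2)) (hchord : Chordal G)
    (hcol : ∃ α : V → Fin k, IsColoring G k α)
    (T : Set V) (hT : G.IsClique T) (hTne : T ≠ Set.univ) (v : V) (hv : v ∈ T)
    (hN : ∀ u : V, G.Adj v u → u ∈ T) :
    (((Tdel T v).ncard = k - 2 ∧
        IsColorComplete k (CSG (G.induce (delSet v)) k (Tdel T v))
          (csgLabel (G.induce (delSet v)) k (Tdel T v))) →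
      (T.ncard = k - 1 ∧ IsColorComplete k (CSG G k T) (csgLabel G k T))) ∧
    ((T.ncard = k ∨
        (IsAcyclic (CSG (G.induce (delSet v)) k (Tdel T v)) ∧
          INP (CSG (G.induce (delSet v)) k (Tdel T v))
            (csgLabel (G.induce (delSet v)) k (Tdel T v)))) →
      (IsAcyclic (CSG G k T) ∧ INP (CSG G k T) (csgLabel G k T))) :=
  statement_12_general G k hk hconn hcol T hT hTne v hv hN
end
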